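/- arXiv:1001.1062 — 3 statements merged into one kernel-verified Lean document; each statement's English description precedes it below -/
import Mathlib

section
/- Let t be a 2×2 matrix over Z_2[u, u^{-1}] with det(t) = 1 and symmetric entries, and let ξ be a nonzero column vector over Z_2[u, u^{-1}]. Then the limit lim_{n→∞} deg(t^n ξ)/n exists, where deg of a vector is the maximum degree of its two entries. -/
open LaurentPolynomial Matrix Filter

/-- The degree of a Laurent polynomial over Z₂: the maximal absolute exponent
with nonzero coefficient (0 for the zero polynomial). -/
noncomputable def polyDeg (p : LaurentPolynomial (ZMod 2)) : ℕ :=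
  p.coeff.support.sup fun x => x.natAbs

/-- The degree of a vector of Laurent polynomials: max over components. -/
noncomputable def vecDeg (ξ : Fin 2 → LaurentPolynomial (ZMod 2)) : ℕ :=
  max (polyDeg (ξ 0)) (polyDeg (ξ 1))

abbrev R2 := LaurentPolynomial (ZMod 2)

lemma R2.add_self (x : R2) : x + x = 0 := by
  have h : (1 : R2) + 1 = 0 := by
    have h2 : ((1 : ZMod 2) + 1) = 0 := by decide
    rw [← map_one (LaurentPolynomial.C (R := ZMod 2)), ← map_add, h2, map_zero]
  calc x + x = (1 + 1) * x := by ring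
  _ = 0 := by rw [h, zero_mul]

lemma R2.neg_eq (x : R2) : -x = x := by
  rw [neg_eq_iff_add_eq_zero, R2.add_self]

lemma coeff_mul_bound {p q : R2} {dp dq : ℤ}
    (hp : ∀ y, p.coeff y ≠ 0 → y ≤ dp) (hq : ∀ y, q.coeff y ≠ 0 → y ≤ dq) :
    ∀ x, dp + dq < x → (p * q).coeff x = 0 := by
  intro x hx
  rw [AddMonoidAlgebra.mul_apply]
  rw [Finsupp.sum]
  refine Finset.sum_eq_zero fun a ha => ?_
  rw [Finsupp.sum]
  refine Finset.sum_eq_zero fun b hb => ?_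
  refine if_neg fun he => ?_
  have h1 := hp a (Finsupp.mem_support_iff.mp ha)
  have h2 := hq b (Finsupp.mem_support_iff.mp hb)
  omega

lemma coeff_mul_top {p q : R2} {dp dq : ℤ}
    (hp : ∀ y, p.coeff y ≠ 0 → y ≤ dp) (hq : ∀ y, q.coeff y ≠ 0 → y ≤ dq) :
    (p * q).coeff (dp + dq) = p.coeff dp * q.coeff dq := by
  rw [AddMonoidAlgebra.mul_apply, Finsupp.sum]
  rw [Finset.sum_eq_single dp]
  · rw [Finsupp.sum, Finset.sum_eq_single dq]
    · simp
    · intro b hb hne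
      refine if_neg fun he => ?_
      have h2 := hq b (Finsupp.mem_support_iff.mp hb)
      omega
    · intro h
      rw [Finsupp.notMem_support_iff.mp h, if_pos rfl, mul_zero]
  · intro a ha hne
    rw [Finsupp.sum]
    refine Finset.sum_eq_zero fun b hb => ?_
    refine if_neg fun he => ?_
    have h1 := hp a (Finsupp.mem_support_iff.mp ha)
    have h2 := hq b (Finsupp.mem_support_iff.mp hb)
    have h1' : a ≠ dp := hne
    omega
  · intro h
    rw [Finsupp.sum]
    refine Finset.sum_eq_zero fun b hb => ?_
    simp [Finsupp.notMem_support_iff.mp h]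

noncomputable def vTop (v : Fin 2 → R2) : ℤ :=
  WithBot.unbotD 0 (((v 0).coeff.support ∪ (v 1).coeff.support).max)

lemma vec_ne_zero_iff {v : Fin 2 → R2} : v ≠ 0 ↔ ((v 0).coeff.support ∪ (v 1).coeff.support).Nonempty := by
  rw [Finset.nonempty_iff_ne_empty]
  constructor
  · intro h hc
    apply h
    ext i x
    have h0 : (v 0).coeff.support = ∅ ∧ (v 1).coeff.support = ∅ := by
      constructor <;> (rw [← Finset.subset_empty, ← hc]; simp [Finset.subset_union_left, Finset.subset_union_right])
    fin_cases i
    · simpa using Finsupp.support_eq_empty.mp h0.1 ▸ rfl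
    · simpa using Finsupp.support_eq_empty.mp h0.2 ▸ rfl
  · intro h hc
    rw [hc] at h
    simp at h

lemma vTop_le {v : Fin 2 → R2} {i : Fin 2} {x : ℤ} (hx : (v i).coeff x ≠ 0) : x ≤ vTop v := by
  have hmem : x ∈ (v 0).coeff.support ∪ (v 1).coeff.support := by
    fin_cases i <;> simp_all [Finsupp.mem_support_iff]
  have hne : ((v 0).coeff.support ∪ (v 1).coeff.support).Nonempty := ⟨x, hmem⟩
  obtain ⟨m, hm⟩ := Finset.max_of_nonempty hne
  have h2 := Finset.le_max hmem
  rw [hm] at h2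
  have : vTop v = m := by simp [vTop, hm]
  rw [this]
  exact_mod_cast h2

lemma vTop_mem {v : Fin 2 → R2} (hv : v ≠ 0) : ∃ i, (v i).coeff (vTop v) ≠ 0 := by
  obtain ⟨m, hm⟩ := Finset.max_of_nonempty (vec_ne_zero_iff.mp hv)
  have hmem := Finset.mem_of_max hm
  have hvt : vTop v = m := by simp [vTop, hm]
  rw [Finset.mem_union] at hmem
  rcases hmem with h | h
  · exact ⟨0, by rw [hvt]; exact Finsupp.mem_support_iff.mp h⟩
  · exact ⟨1, by rw [hvt]; exact Finsupp.mem_support_iff.mp h⟩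
section Step
variable {τ : R2} {d : ℤ}

lemma step_lemma (hd : 1 ≤ d) (hτd : τ.coeff d ≠ 0) (hτle : ∀ x, τ.coeff x ≠ 0 → x ≤ d)
    {a b c : Fin 2 → R2} (hb : b ≠ 0)
    (hrec : ∀ i, c i = τ * b i + a i) (h : vTop a < vTop b + d) :
    c ≠ 0 ∧ vTop c = vTop b + d := by
  obtain ⟨i, hi⟩ := vTop_mem hb
  have hble : ∀ y, (b i).coeff y ≠ 0 → y ≤ vTop b := fun y hy => vTop_le hy
  have hkey : (c i).coeff (vTop b + d) ≠ 0 := by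
    rw [hrec i, AddMonoidAlgebra.coeff_add, Finsupp.add_apply]
    have h1 : (τ * b i).coeff (d + vTop b) = τ.coeff d * (b i).coeff (vTop b) := coeff_mul_top hτle hble
    have h2 : (a i).coeff (vTop b + d) = 0 := by
      by_contra hc
      exact absurd (vTop_le hc) (by omega)
    rw [add_comm (vTop b) d] at *
    rw [h1, h2, add_zero]
    exact mul_ne_zero hτd hi
  have hc0 : c ≠ 0 := fun hc => hkey (by rw [hc]; rfl)
  refine ⟨hc0, le_antisymm ?_ (vTop_le hkey)⟩
  obtain ⟨j, hj⟩ := vTop_mem hc0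
  rw [hrec j, AddMonoidAlgebra.coeff_add, Finsupp.add_apply] at hj
  rcases (by by_contra hcon; push_neg at hcon; rw [hcon.1, hcon.2] at hj; simp at hj :
      (τ * b j).coeff (vTop c) ≠ 0 ∨ (a j).coeff (vTop c) ≠ 0) with h1 | h1
  · by_contra hcon
    push_neg at hcon
    have := coeff_mul_bound hτle (fun y hy => vTop_le (v := b) (i := j) hy) (vTop c) (by omega)
    exact h1 this
  · have := vTop_le h1
    omega

lemma decr_lemma (hd : 1 ≤ d) (hτd : τ.coeff d ≠ 0) (hτle : ∀ x, τ.coeff x ≠ 0 → x ≤ d)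
    {v : ℕ → Fin 2 → R2} (hv : ∀ n, v n ≠ 0)
    (hrec : ∀ n i, v (n+2) i = τ * v (n+1) i + v n i) :
    (∀ n, vTop (v (n+1)) = vTop (v n) - d) ∨
      ∃ N, ∀ n, N ≤ n → vTop (v (n+1)) = vTop (v n) + d := by
  by_cases hall : ∀ n, vTop (v (n+1)) ≤ vTop (v n) - d
  · left
    intro n
    refine le_antisymm (hall n) ?_
    -- reverse recurrence : v n i = τ * v (n+1) i + v (n+2) i
    have hrev : ∀ i, v n i = τ * v (n+1) i + v (n+2) i := by
      intro i
      have := hrec n i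
      have h2 : v (n+2) i + v (n+2) i = 0 := R2.add_self _
      calc v n i = τ * v (n+1) i + v n i + (τ * v (n+1) i) := by
            rw [add_comm (τ * v (n+1) i) (v n i), add_assoc, R2.add_self, add_zero]
        _ = v (n+2) i + τ * v (n+1) i := by rw [← this, add_comm]
        _ = τ * v (n+1) i + v (n+2) i := add_comm _ _
    -- vTop (v n) ≤ max (d + vTop (v (n+1))) (vTop (v (n+2)))
    obtain ⟨j, hj⟩ := vTop_mem (hv n)
    rw [hrev j, AddMonoidAlgebra.coeff_add, Finsupp.add_apply] at hj
    have h2 : vTop (v (n+2)) ≤ vTop (v (n+1)) - d := hall (n+1)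
    rcases (by by_contra hcon; push_neg at hcon; rw [hcon.1, hcon.2] at hj; simp at hj :
        (τ * v (n+1) j).coeff (vTop (v n)) ≠ 0 ∨ (v (n+2) j).coeff (vTop (v n)) ≠ 0) with h1 | h1
    · by_contra hcon
      push_neg at hcon
      exact h1 (coeff_mul_bound hτle (fun y hy => vTop_le (v := v (n+1)) (i := j) hy)
        (vTop (v n)) (by omega))
    · have := vTop_le h1
      have := hall n
      omega
  · right
    push_neg at hall
    obtain ⟨N, hN⟩ := hall
    refine ⟨N + 1, fun n hn => ?_⟩
    -- strong statement by induction from N+1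
    have key : ∀ m, vTop (v (N + 1 + m + 1)) = vTop (v (N + 1 + m)) + d := by
      intro m
      induction m with
      | zero =>
        exact (step_lemma hd hτd hτle (hv (N+1)) (hrec N) (by omega)).2
      | succ k ih =>
        have : vTop (v (N + 1 + k)) < vTop (v (N + 1 + k + 1)) + d := by omega
        have h3 := (step_lemma hd hτd hτle (hv (N + 1 + k + 1))
          (hrec (N + 1 + k)) this).2
        convert h3 using 3
        · omega
        · exact congrArg v (by omega)
    have := key (n - (N+1))
    have he : N + 1 + (n - (N+1)) = n := by omega
    rw [he] at this
    exact this
end Step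
section CH
variable (t : Matrix (Fin 2) (Fin 2) R2)

lemma ch_lemma (hdet : t.det = 1) :
    t * t + 1 = (t 0 0 + t 1 1) • t := by
  rw [Matrix.det_fin_two] at hdet
  refine Matrix.ext fun i j => ?_
  fin_cases i <;> fin_cases j <;>
    simp only [Matrix.add_apply, Matrix.mul_apply, Fin.sum_univ_two, Matrix.one_apply,
      Matrix.smul_apply, smul_eq_mul, Fin.zero_eta, Fin.mk_one, if_true, if_false, eq_self_iff_true,
      one_ne_zero, zero_ne_one, ite_true, ite_false, reduceIte] <;>
    first
      | linear_combination hdet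
      | linear_combination -hdet
      | ring

lemma rec_lemma (hdet : t.det = 1) (ξ : Fin 2 → R2) (n : ℕ) (i : Fin 2) :
    ((t ^ (n+2)) *ᵥ ξ) i = (t 0 0 + t 1 1) * (((t ^ (n+1)) *ᵥ ξ) i) + ((t ^ n) *ᵥ ξ) i := by
  have h : t ^ (n+2) = (t 0 0 + t 1 1) • (t ^ (n+1)) + t ^ n := by
    have h2 : t ^ (n+2) + t^n = (t 0 0 + t 1 1) • (t ^ (n+1)) := by
      have hpow : t ^ (n+2) = t * t * t ^ n := by
        rw [show n + 2 = 2 + n by omega, pow_add, pow_two]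
      have : t ^ (n+2) + t ^ n = (t * t + 1) * t ^ n := by
        rw [add_mul, one_mul, hpow]
      rw [this, ch_lemma t hdet, Matrix.smul_mul]
      congr 1
      rw [pow_succ']
    have h3 : t ^ n + t ^ n = 0 := by
      ext i j
      simp [Matrix.add_apply, R2.add_self]
    calc t ^ (n+2) = t ^ (n+2) + (t ^ n + t ^ n) := by rw [h3, add_zero]
      _ = (t ^ (n+2) + t^n) + t ^ n := (add_assoc _ _ _).symm
      _ = (t 0 0 + t 1 1) • (t ^ (n+1)) + t ^ n := by rw [h2]
  rw [h, Matrix.add_mulVec, Matrix.smul_mulVec]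
  simp [Pi.add_apply, Pi.smul_apply, smul_eq_mul]
  fin_cases i <;> simp

lemma vn_ne_zero (hdet : t.det = 1) (ξ : Fin 2 → R2) (hξ : ξ ≠ 0) (n : ℕ) :
    (t ^ n) *ᵥ ξ ≠ 0 := by
  intro hc
  apply hξ
  have hu : IsUnit (t ^ n).det := by
    rw [Matrix.det_pow, hdet, one_pow]; exact isUnit_one
  have := Matrix.nonsing_inv_mul (t ^ n) hu
  calc ξ = ((t ^ n)⁻¹ * (t ^ n)) *ᵥ ξ := by rw [this, Matrix.one_mulVec]
    _ = (t ^ n)⁻¹ *ᵥ ((t ^ n) *ᵥ ξ) := by rw [Matrix.mulVec_mulVec]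
    _ = 0 := by rw [hc, Matrix.mulVec_zero]
end CH
section Invert

lemma invert_coeff (p : R2) (x : ℤ) : (invert p).coeff x = p.coeff (-x) := invert_apply p x

lemma invert_vec (t : Matrix (Fin 2) (Fin 2) R2)
    (hsym : ∀ i j, ∀ x : ℤ, (t i j).coeff x = (t i j).coeff (-x)) (ξ : Fin 2 → R2) (n : ℕ) (i : Fin 2) :
    ((t ^ n) *ᵥ (fun j => invert (ξ j))) i = invert (((t ^ n) *ᵥ ξ) i) := by
  set σ : R2 →+* R2 := (invert : R2 ≃ₐ[ZMod 2] R2).toRingEquiv.toRingHom with hσ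
  have hσa : ∀ p : R2, σ p = invert p := fun p => rfl
  have htmap : t.map (⇑σ) = t := by
    refine Matrix.ext fun i j => ?_
    refine AddMonoidAlgebra.ext (Finsupp.ext fun x => ?_)
    rw [Matrix.map_apply, hσa, invert_coeff]
    exact (hsym i j x).symm
  have hpow : (t ^ n).map (⇑σ) = t ^ n := by
    have h1 : (t ^ n).map (⇑σ) = (σ.mapMatrix : Matrix (Fin 2) (Fin 2) R2 →+* _) (t ^ n) := rfl
    rw [h1, map_pow]
    have : (σ.mapMatrix : Matrix (Fin 2) (Fin 2) R2 →+* _) t = t.map (⇑σ) := rfl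
    rw [this, htmap]
  have hentry : ∀ i j, σ ((t ^ n) i j) = (t ^ n) i j := by
    intro i j
    conv_rhs => rw [← hpow]
    rfl
  rw [Matrix.mulVec, dotProduct, Matrix.mulVec, dotProduct]
  calc ∑ j, (t ^ n) i j * invert (ξ j)
      = ∑ j, invert ((t ^ n) i j * ξ j) := by
        refine Finset.sum_congr rfl fun j _ => ?_
        rw [_root_.map_mul, show invert ((t ^ n) i j) = (t ^ n) i j from hentry i j]
    _ = invert (∑ j, (t ^ n) i j * ξ j) := (map_sum (invert (R := ZMod 2)).toAlgHom _ _).symm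

lemma invert_vec_ne_zero {v : Fin 2 → R2} (hv : v ≠ 0) :
    (fun i => invert (v i)) ≠ 0 := by
  intro hc
  apply hv
  ext i x
  have := congrFun hc i
  have h2 : invert (v i) = 0 := this
  have : v i = 0 := by
    have := congrArg (invert (R := ZMod 2)) h2
    rwa [LaurentPolynomial.involutive_invert (v i), map_zero] at this
  simp [this]

lemma vTop_pair_nonneg {v : Fin 2 → R2} (hv : v ≠ 0) :
    0 ≤ vTop v + vTop (fun i => invert (v i)) := by
  obtain ⟨i, hi⟩ := vTop_mem hv
  have h1 := vTop_le hi
  have hx' : ((fun i => invert (v i)) i).coeff (-(vTop v)) ≠ 0 := by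
    show (invert (v i)).coeff (-(vTop v)) ≠ 0
    rw [invert_apply, neg_neg]
    exact hi
  have h2 := vTop_le (v := fun i => invert (v i)) (i := i) (x := -(vTop v)) hx'
  omega

lemma vecDeg_eq_max {v : Fin 2 → R2} (hv : v ≠ 0) :
    (vecDeg v : ℤ) = max (vTop v) (vTop (fun i => invert (v i))) := by
  have hv' : (fun i => invert (v i)) ≠ 0 := invert_vec_ne_zero hv
  refine le_antisymm ?_ ?_
  · rw [vecDeg]
    have hb : ∀ i : Fin 2, (polyDeg (v i) : ℤ) ≤
        max (vTop v) (vTop (fun i => invert (v i))) := by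
      intro i
      rw [polyDeg]
      rcases Finset.eq_empty_or_nonempty (v i).coeff.support with he | hne
      · have := vTop_pair_nonneg hv
        rw [he, Finset.sup_empty]
        have h0 : ((⊥ : ℕ) : ℤ) = 0 := rfl
        rw [h0]
        omega
      · obtain ⟨x, hx, hxe⟩ := Finset.exists_mem_eq_sup _ hne (fun x : ℤ => x.natAbs)
        rw [hxe]
        have hxne : (v i).coeff x ≠ 0 := Finsupp.mem_support_iff.mp hx
        rcases le_or_gt 0 x with h0 | h0
        · have h2 := vTop_le hxne
          have h3 : (x.natAbs : ℤ) = x := Int.natAbs_of_nonneg h0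
          omega
        · have hx' : ((fun i => invert (v i)) i).coeff (-x) ≠ 0 := by
            show (invert (v i)).coeff (-x) ≠ 0
            rw [invert_apply, neg_neg]
            exact hxne
          have h2 := vTop_le (v := fun i => invert (v i)) (i := i) (x := -x) hx'
          omega
    have h0 := hb 0
    have h1 := hb 1
    push_cast
    omega
  · rw [max_le_iff]
    constructor
    · obtain ⟨i, hi⟩ := vTop_mem hv
      have h1 : (vTop v).natAbs ≤ polyDeg (v i) := by
        rw [polyDeg]
        exact Finset.le_sup (Finsupp.mem_support_iff.mpr hi)
      have h2 : polyDeg (v i) ≤ vecDeg v := by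
        rw [vecDeg]; fin_cases i <;> simp
      have := Int.le_natAbs (a := vTop v)
      push_cast at *
      omega
    · obtain ⟨i, hi⟩ := vTop_mem hv'
      have hvi : (v i).coeff (-(vTop (fun i => invert (v i)))) ≠ 0 := by
        have h3 : (invert (v i)).coeff (vTop (fun i => invert (v i))) ≠ 0 := hi
        rwa [invert_apply] at h3
      have h1 : (vTop (fun i => invert (v i))).natAbs ≤ polyDeg (v i) := by
        rw [polyDeg]
        have h4 : (-(vTop (fun i => invert (v i)))).natAbs =
            (vTop (fun i => invert (v i))).natAbs := Int.natAbs_neg _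
        rw [← h4]
        exact Finset.le_sup (Finsupp.mem_support_iff.mpr hvi)
      have h2 : polyDeg (v i) ≤ vecDeg v := by
        rw [vecDeg]; fin_cases i <;> simp
      have := Int.le_natAbs (a := vTop (fun i => invert (v i)))
      push_cast at *
      omega

end Invert
section Arith
variable {d : ℤ}

lemma gap_grows {Tv Tw : ℕ → ℤ} (hd : 1 ≤ d) {N : ℕ}
    (hv : ∀ n, Tv (n+1) = Tv n - d) (hw : ∀ n, N ≤ n → Tw (n+1) = Tw n + d) :
    ∀ k : ℕ, Tw N - Tv N + 2 * k ≤ Tw (N + k) - Tv (N + k) := by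
  intro k
  induction k with
  | zero => simp
  | succ m ih =>
    have h1 := hv (N + m)
    have h2 := hw (N + m) (by omega)
    have e1 : N + (m+1) = (N + m) + 1 := by omega
    rw [e1]
    push_cast
    omega

lemma sum_falls {Tv Tw : ℕ → ℤ} (hd : 1 ≤ d)
    (hv : ∀ n, Tv (n+1) = Tv n - d) (hw : ∀ n, Tw (n+1) = Tw n - d) :
    ∀ k : ℕ, Tv k + Tw k ≤ Tv 0 + Tw 0 - 2 * k := by
  intro k
  induction k with
  | zero => simp
  | succ m ih =>
    have h1 := hv m
    have h2 := hw m
    push_cast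
    omega

lemma invariant_step {Tv Tw : ℕ → ℤ} (hd : 1 ≤ d) {N : ℕ}
    (hv : ∀ n, Tv (n+1) = Tv n - d) (hw : ∀ n, N ≤ n → Tw (n+1) = Tw n + d)
    {n0 : ℕ} (hn0 : N ≤ n0) (hbase : Tv n0 ≤ Tw n0) :
    ∀ n, n0 ≤ n → Tv n ≤ Tw n := by
  intro n hn
  induction n with
  | zero =>
    have : n0 = 0 := by omega
    rw [← this]; exact hbase
  | succ m ih =>
    rcases Nat.lt_or_ge m n0 with h | h
    · have : n0 = m + 1 := by omega
      rw [← this]; exact hbase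
    · have h1 := hv m
      have h2 := hw m (by omega)
      have := ih (by omega)
      omega

lemma max_step {Tv Tw : ℕ → ℤ} (hd : 1 ≤ d)
    (hv : (∀ n, Tv (n+1) = Tv n - d) ∨ ∃ N, ∀ n, N ≤ n → Tv (n+1) = Tv n + d)
    (hw : (∀ n, Tw (n+1) = Tw n - d) ∨ ∃ N, ∀ n, N ≤ n → Tw (n+1) = Tw n + d)
    (hsum : ∀ n, 0 ≤ Tv n + Tw n) :
    ∃ N, ∀ n, N ≤ n → max (Tv (n+1)) (Tw (n+1)) = max (Tv n) (Tw n) + d := by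
  rcases hv with hv | ⟨Nv, hv⟩
  · rcases hw with hw | ⟨Nw, hw⟩
    · exfalso
      have h1 := sum_falls hd hv hw ((Tv 0 + Tw 0).toNat + 1)
      have h2 := hsum ((Tv 0 + Tw 0).toNat + 1)
      have h3 := hsum 0
      omega
    · -- Tv decreasing, Tw increasing from Nw
      set k0 : ℕ := (Tv Nw - Tw Nw).toNat with hk0
      have hgap := gap_grows hd hv hw k0
      have hbase : Tv (Nw + k0) ≤ Tw (Nw + k0) := by omega
      have hinv := invariant_step hd hv hw (Nat.le_add_right Nw k0) hbase
      refine ⟨Nw + k0, fun n hn => ?_⟩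
      have hle := hinv n hn
      have hle' := hinv (n+1) (by omega)
      have h1 := hv n
      have h2 := hw n (by omega)
      omega
  · rcases hw with hw | ⟨Nw, hw⟩
    · set k0 : ℕ := (Tw Nv - Tv Nv).toNat with hk0
      have hgap := gap_grows hd hw hv k0
      have hbase : Tw (Nv + k0) ≤ Tv (Nv + k0) := by omega
      have hinv := invariant_step hd hw hv (Nat.le_add_right Nv k0) hbase
      refine ⟨Nv + k0, fun n hn => ?_⟩
      have hle := hinv n hn
      have hle' := hinv (n+1) (by omega)
      have h1 := hw n
      have h2 := hv n (by omega)
      omega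
    · refine ⟨max Nv Nw, fun n hn => ?_⟩
      have h1 := hv n (by omega)
      have h2 := hw n (by omega)
      omega

lemma arith_formula {M : ℕ → ℤ} {N : ℕ}
    (h : ∀ n, N ≤ n → M (n+1) = M n + d) :
    ∀ n, N ≤ n → M n = M N + ((n : ℤ) - N) * d := by
  intro n hn
  induction n with
  | zero =>
    have : N = 0 := by omega
    simp [this]
  | succ m ih =>
    rcases Nat.lt_or_ge m N with hc | hc
    · have : N = m + 1 := by omega
      simp [← this]
    · have h1 := h m hc
      have h2 := ih hc
      rw [h1, h2]
      push_cast
      ring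
end Arith
section CaseA

lemma matrix_add_self (M : Matrix (Fin 2) (Fin 2) R2) : M + M = 0 := by
  ext i j
  simp [Matrix.add_apply, R2.add_self]

lemma t6_eq_one (t : Matrix (Fin 2) (Fin 2) R2) (hdet : t.det = 1)
    (hτ : t 0 0 + t 1 1 = 0 ∨ t 0 0 + t 1 1 = 1) : t ^ 6 = 1 := by
  have ht2 := ch_lemma t hdet
  rcases hτ with h | h
  · rw [h, zero_smul] at ht2
    have htt : t * t = 1 := by
      have h2 : t * t = (t * t + 1) + 1 := by
        rw [add_assoc]
        have : (1 : Matrix (Fin 2) (Fin 2) R2) + 1 = 0 := matrix_add_self 1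
        rw [this, add_zero]
      rw [h2, ht2, zero_add]
    calc t ^ 6 = (t ^ 2) ^ 3 := by rw [← pow_mul]
      _ = 1 := by rw [pow_two, htt, one_pow]
  · rw [h, one_smul] at ht2
    have htt : t * t = t + 1 := by
      have h2 : t * t = (t * t + 1) + 1 := by
        rw [add_assoc]
        have : (1 : Matrix (Fin 2) (Fin 2) R2) + 1 = 0 := matrix_add_self 1
        rw [this, add_zero]
      rw [h2, ht2]
    have ht3 : t ^ 3 = 1 := by
      have : t ^ 3 = t * t * t := by
        rw [pow_succ, pow_two]
      rw [this, htt, add_mul, one_mul, htt]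
      rw [add_comm t 1, add_assoc, matrix_add_self, add_zero]
    calc t ^ 6 = (t ^ 3) ^ 2 := by rw [← pow_mul]
      _ = 1 := by rw [ht3, one_pow]

end CaseA

theorem cqca_deg_growth_limit_exists'
    (t : Matrix (Fin 2) (Fin 2) (LaurentPolynomial (ZMod 2)))
    (hdet : t.det = 1) (hsym : ∀ i j, ∀ x : ℤ, (t i j).coeff x = (t i j).coeff (-x))
    (ξ : Fin 2 → LaurentPolynomial (ZMod 2)) (hξ : ξ ≠ 0) :
    ∃ c : ℝ, Tendsto (fun n : ℕ => (vecDeg ((t ^ n) *ᵥ ξ) : ℝ) / n) atTop (nhds c) := by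
  set τ : R2 := t 0 0 + t 1 1 with hτdef
  have τsymm : ∀ x : ℤ, τ.coeff x = τ.coeff (-x) := by
    intro x
    have h1 : τ.coeff x = (t 0 0).coeff x + (t 1 1).coeff x := by rw [hτdef]; exact Finsupp.add_apply _ _ _
    have h2 : τ.coeff (-x) = (t 0 0).coeff (-x) + (t 1 1).coeff (-x) := by rw [hτdef]; exact Finsupp.add_apply _ _ _
    rw [h1, h2, hsym 0 0 x, hsym 1 1 x]
  have hzmod : ∀ b : ZMod 2, b = 0 ∨ b = 1 := by decide
  rcases Nat.eq_zero_or_pos (polyDeg τ) with hA | hB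
  · -- Case A : bounded degree, limit 0
    have hsupp : ∀ x : ℤ, τ.coeff x ≠ 0 → x = 0 := by
      intro x hx
      have h1 : x.natAbs ≤ polyDeg τ :=
        Finset.le_sup (f := fun x : ℤ => x.natAbs) (Finsupp.mem_support_iff.mpr hx)
      omega
    have hτcases : τ = 0 ∨ τ = 1 := by
      rcases hzmod (τ.coeff 0) with h0 | h0
      · left
        refine AddMonoidAlgebra.ext (Finsupp.ext fun x => ?_)
        rcases eq_or_ne x 0 with rfl | hx
        · exact h0
        · by_contra hc
          exact hx (hsupp x hc)
      · right
        refine AddMonoidAlgebra.ext (Finsupp.ext fun x => ?_)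
        have hone : (1 : R2).coeff x = if (0 : ℤ) = x then 1 else 0 := by
          rw [AddMonoidAlgebra.one_def]
          exact Finsupp.single_apply
        rcases eq_or_ne x 0 with rfl | hx
        · rw [hone, if_pos rfl]; exact h0
        · rw [hone, if_neg (Ne.symm hx)]
          by_contra hc
          exact hx (hsupp x hc)
      
    have ht6 : t ^ 6 = 1 := t6_eq_one t hdet (by rwa [← hτdef])
    have hper : ∀ n : ℕ, t ^ n = t ^ (n % 6) := by
      intro n
      conv_lhs => rw [← Nat.div_add_mod n 6]
      rw [pow_add, pow_mul, ht6, one_pow, one_mul]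
    set K : ℕ := (Finset.range 6).sup (fun k => vecDeg ((t ^ k) *ᵥ ξ)) with hKdef
    have hK : ∀ n, vecDeg ((t ^ n) *ᵥ ξ) ≤ K := by
      intro n
      rw [hper n]
      exact Finset.le_sup (f := fun k => vecDeg ((t ^ k) *ᵥ ξ))
        (Finset.mem_range.mpr (Nat.mod_lt _ (by norm_num : (0:ℕ) < 6)))
    refine ⟨0, ?_⟩
    refine tendsto_of_tendsto_of_tendsto_of_le_of_le (g := fun _ : ℕ => (0 : ℝ))
      (h := fun n : ℕ => (K : ℝ) / n) tendsto_const_nhds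
      (tendsto_const_div_atTop_nhds_zero_nat (K : ℝ)) (fun n => by positivity) (fun n => ?_)
    rcases Nat.eq_zero_or_pos n with rfl | hn
    · simp
    · have hn' : (0 : ℝ) < n := by exact_mod_cast hn
      exact (div_le_div_iff_of_pos_right hn').mpr (by exact_mod_cast hK n)
  · -- Case B : linear growth, limit polyDeg τ
    set d : ℤ := (polyDeg τ : ℤ) with hddef
    have hd : 1 ≤ d := by rw [hddef]; exact_mod_cast hB
    have hτne : τ ≠ 0 := by
      intro h
      rw [h] at hB
      simp [polyDeg] at hB
    have hτle : ∀ x, τ.coeff x ≠ 0 → x ≤ d := by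
      intro x hx
      have h1 : x.natAbs ≤ polyDeg τ :=
        Finset.le_sup (f := fun x : ℤ => x.natAbs) (Finsupp.mem_support_iff.mpr hx)
      omega
    have hτd : τ.coeff d ≠ 0 := by
      obtain ⟨x, hx, hxe⟩ := Finset.exists_mem_eq_sup τ.coeff.support
        (Finsupp.support_nonempty_iff.mpr (mt AddMonoidAlgebra.coeff_eq_zero.mp hτne)) (fun x : ℤ => x.natAbs)
      have hxe' : polyDeg τ = x.natAbs := hxe
      have hxne := Finsupp.mem_support_iff.mp hx
      rcases Int.natAbs_eq x with he | he
      · rw [show d = x by omega]; exact hxne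
      · rw [show d = -x by omega, ← τsymm x]; exact hxne
    set v : ℕ → Fin 2 → R2 := fun n => (t ^ n) *ᵥ ξ with hvdef
    set ξ' : Fin 2 → R2 := fun j => invert (ξ j) with hξ'def
    set w : ℕ → Fin 2 → R2 := fun n => (t ^ n) *ᵥ ξ' with hwdef
    have hξ' : ξ' ≠ 0 := invert_vec_ne_zero hξ
    have hv : ∀ n, v n ≠ 0 := vn_ne_zero t hdet ξ hξ
    have hw : ∀ n, w n ≠ 0 := vn_ne_zero t hdet ξ' hξ'
    have hrecv : ∀ n i, v (n+2) i = τ * v (n+1) i + v n i := fun n i => rec_lemma t hdet ξ n i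
    have hrecw : ∀ n i, w (n+2) i = τ * w (n+1) i + w n i := fun n i => rec_lemma t hdet ξ' n i
    have hw_eq : ∀ n, (fun i => invert (v n i)) = w n :=
      fun n => funext fun i => (invert_vec t hsym ξ n i).symm
    have dichov := decr_lemma (τ := τ) hd hτd hτle hv hrecv
    have dichow := decr_lemma (τ := τ) hd hτd hτle hw hrecw
    have hsum : ∀ n, 0 ≤ vTop (v n) + vTop (w n) := by
      intro n
      have := vTop_pair_nonneg (hv n)
      rwa [hw_eq n] at this
    obtain ⟨N, hN⟩ := max_step hd dichov dichow hsum
    set M : ℕ → ℤ := fun n => max (vTop (v n)) (vTop (w n)) with hMdef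
    have hMf : ∀ n, N ≤ n → M n = M N + ((n : ℤ) - N) * d := arith_formula hN
    have hbridge : ∀ n, (vecDeg (v n) : ℤ) = M n := by
      intro n
      rw [vecDeg_eq_max (hv n), hw_eq n]
    refine ⟨(polyDeg τ : ℝ), ?_⟩
    set C : ℝ := (M N : ℝ) - (N : ℝ) * (polyDeg τ : ℝ) with hCdef
    have hbase : Tendsto (fun n : ℕ => (polyDeg τ : ℝ) + C / n) atTop
        (nhds ((polyDeg τ : ℝ) + 0)) :=
      tendsto_const_nhds.add (tendsto_const_div_atTop_nhds_zero_nat C)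
    rw [add_zero] at hbase
    refine hbase.congr' ?_
    rw [Filter.EventuallyEq, eventually_atTop]
    refine ⟨max N 1, fun n hn => ?_⟩
    have hn1 : 1 ≤ n := le_of_max_le_right hn
    have hnN : N ≤ n := le_of_max_le_left hn
    show (polyDeg τ : ℝ) + C / n = (vecDeg (v n) : ℝ) / n
    have h2 := hbridge n
    rw [hMf n hnN] at h2
    have h3 : (vecDeg (v n) : ℝ) = (M N : ℝ) + ((n : ℝ) - (N : ℝ)) * (d : ℝ) := by
      exact_mod_cast congrArg (Int.cast : ℤ → ℝ) h2
    have hdd : (d : ℝ) = (polyDeg τ : ℝ) := by rw [hddef]; push_cast; ring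
    rw [h3, hCdef, hdd]
    have hne : (n : ℝ) ≠ 0 := by positivity
    field_simp
    ring


/-- For a centered CQCA matrix t (det 1, symmetric entries) and a nonzero
vector ξ, the limit lim_{n→∞} deg(tⁿ ξ)/n exists. -/
theorem cqca_deg_growth_limit_exists
    (t : Matrix (Fin 2) (Fin 2) (LaurentPolynomial (ZMod 2)))
    (hdet : t.det = 1) (hsym : ∀ i j, ∀ x : ℤ, (t i j).coeff x = (t i j).coeff (-x))
    (ξ : Fin 2 → LaurentPolynomial (ZMod 2)) (hξ : ξ ≠ 0) :
    ∃ c : ℝ, Tendsto (fun n : ℕ => (vecDeg ((t ^ n) *ᵥ ξ) : ℝ) / n) atTop (nhds c) := by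
  exact cqca_deg_growth_limit_exists' t hdet hsym ξ hξ
end

section
/- If a 2×2 matrix t over Z_2[u, u^{-1}] with det(t) = 1, symmetric entries, has the property that deg(t^n ξ) is bounded in n for some vector ξ with coprime nonzero entries, then deg(tr t) = 0, i.e. the trace is a constant. -/
open LaurentPolynomial Matrix

abbrev LP := LaurentPolynomial (ZMod 2)


def Symm (p : LP) : Prop := ∀ x : ℤ, p.coeff x = p.coeff (-x)

lemma symm_invert {p : LP} (h : Symm p) : invert p = p := by
  ext n; rw [invert_apply]; exact (h n).symm

lemma symm_of_invert {p : LP} (h : invert p = p) : Symm p := by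
  intro x; conv_lhs => rw [← h]
  exact invert_apply p x

lemma Symm.add {p q : LP} (hp : Symm p) (hq : Symm q) : Symm (p + q) := by
  apply symm_of_invert; rw [_root_.map_add, symm_invert hp, symm_invert hq]

lemma Symm.mul {p q : LP} (hp : Symm p) (hq : Symm q) : Symm (p * q) := by
  apply symm_of_invert; rw [_root_.map_mul, symm_invert hp, symm_invert hq]

lemma Symm.sub {p q : LP} (hp : Symm p) (hq : Symm q) : Symm (p - q) := by
  apply symm_of_invert; rw [_root_.map_sub, symm_invert hp, symm_invert hq]

lemma symm_zero : Symm 0 := by intro x; simp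

lemma symm_one : Symm 1 := by apply symm_of_invert; rw [_root_.map_one]

lemma polyDeg_zero : polyDeg 0 = 0 := by simp [polyDeg]

lemma polyDeg_one : polyDeg 1 = 0 := by
  rw [polyDeg, ← single_zero_one_eq_one, AddMonoidAlgebra.coeff_single, Finsupp.support_single_ne_zero 0 (by norm_num)]
  simp

lemma support_le {p : LP} {x : ℤ} (hx : x ∈ p.coeff.support) : x.natAbs ≤ polyDeg p :=
  Finset.le_sup hx

lemma apply_eq_zero_of_deg_lt {p : LP} {x : ℤ} (hx : polyDeg p < x.natAbs) : p.coeff x = 0 := by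
  by_contra h
  exact absurd (support_le (Finsupp.mem_support_iff.2 h)) (by omega)

lemma symm_apply_polyDeg {p : LP} (hs : Symm p) (hp : p ≠ 0) :
    p.coeff (polyDeg p : ℤ) ≠ 0 := by
  obtain ⟨x, hx, he⟩ := Finset.exists_mem_eq_sup p.coeff.support
    (Finsupp.support_nonempty_iff.2 (fun h => hp (AddMonoidAlgebra.coeff_injective h))) (fun x => x.natAbs)
  rw [Finsupp.mem_support_iff] at hx
  rcases le_or_gt 0 x with h | h
  · have : (polyDeg p : ℤ) = x := by rw [polyDeg, he]; omega
    rwa [this]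
  · have : (polyDeg p : ℤ) = -x := by rw [polyDeg, he]; omega
    rw [this, ← hs x]; exact hx

lemma mul_apply_top (p q : LP) (a b : ℤ) (hpa : ∀ x ∈ p.coeff.support, x ≤ a)
    (hqb : ∀ x ∈ q.coeff.support, x ≤ b) :
    (p * q).coeff (a + b) = p.coeff a * q.coeff b := by
  classical
  rw [AddMonoidAlgebra.mul_apply, Finsupp.sum]
  rcases eq_or_ne (p.coeff a) 0 with hpa0 | hpa0
  · -- all terms vanish
    rw [hpa0, zero_mul]
    apply Finset.sum_eq_zero
    intro x hx
    rw [Finsupp.sum]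
    apply Finset.sum_eq_zero
    intro y hy
    have hxa : x ≤ a := hpa x hx
    have hxa' : x ≠ a := fun h => (h ▸ Finsupp.mem_support_iff.1 hx) hpa0
    have : x + y ≠ a + b := by have := hqb y hy; omega
    rw [if_neg this]
  · have ha : a ∈ p.coeff.support := Finsupp.mem_support_iff.2 hpa0
    rw [Finset.sum_eq_single a]
    · rw [Finsupp.sum]
      rcases eq_or_ne (q.coeff b) 0 with hqb0 | hqb0
      · rw [hqb0, mul_zero]
        apply Finset.sum_eq_zero
        intro y hy
        have : y ≠ b := fun h => (h ▸ Finsupp.mem_support_iff.1 hy) hqb0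
        have : a + y ≠ a + b := by omega
        rw [if_neg this]
      · rw [Finset.sum_eq_single b]
        · rw [if_pos rfl]
        · intro y hy hyb
          rw [if_neg (by omega)]
        · intro h; exact absurd (Finsupp.mem_support_iff.2 hqb0) h
    · intro x hx hxa
      rw [Finsupp.sum]
      apply Finset.sum_eq_zero
      intro y hy
      have := hpa x hx
      have := hqb y hy
      rw [if_neg (by omega)]
    · intro h; exact absurd ha h

lemma polyDeg_mul {p q : LP} (hp : Symm p) (hq : Symm q) (hp0 : p ≠ 0) (hq0 : q ≠ 0) :
    polyDeg (p * q) = polyDeg p + polyDeg q := by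
  classical
  apply le_antisymm
  · apply Finset.sup_le
    intro x hx
    obtain ⟨y, hy, z, hz, rfl⟩ := Finset.mem_add.1 (AddMonoidAlgebra.support_coeff_mul_subset p q hx)
    have := support_le hy; have := support_le hz
    omega
  · have key : (p * q).coeff ((polyDeg p : ℤ) + polyDeg q) ≠ 0 := by
      rw [mul_apply_top p q _ _ (fun x hx => by have := support_le hx; omega)
        (fun x hx => by have := support_le hx; omega)]
      exact mul_ne_zero (symm_apply_polyDeg hp hp0) (symm_apply_polyDeg hq hq0)
    have := support_le (Finsupp.mem_support_iff.2 key)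
    omega

lemma polyDeg_add {p q : LP} (h : polyDeg q < polyDeg p) : polyDeg (p + q) = polyDeg p := by
  classical
  apply le_antisymm
  · apply Finset.sup_le
    intro x hx
    have := Finsupp.support_add (g₁ := p.coeff) (g₂ := q.coeff) hx
    rcases Finset.mem_union.1 this with h' | h'
    · exact support_le h'
    · have := support_le h'; omega
  · obtain ⟨x, hx, he⟩ := Finset.exists_mem_eq_sup p.coeff.support
      (Finsupp.support_nonempty_iff.2 (fun h0 => by rw [show p = 0 from AddMonoidAlgebra.coeff_injective h0] at h; simp [polyDeg] at h)) (fun x => x.natAbs)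
    have he' : polyDeg p = x.natAbs := he
    have hq0 : q.coeff x = 0 := apply_eq_zero_of_deg_lt (by omega)
    have : (p + q).coeff x ≠ 0 := by
      rw [AddMonoidAlgebra.coeff_add, Finsupp.add_apply, hq0, add_zero]; exact Finsupp.mem_support_iff.1 hx
    have := support_le (Finsupp.mem_support_iff.2 this)
    omega

lemma polyDeg_pos_ne_zero {p : LP} (h : 0 < polyDeg p) : p ≠ 0 := by
  rintro rfl; simp [polyDeg] at h

noncomputable def pnAux (τ : LP) : ℕ → LP
  | 0 => 0
  | 1 => 1
  | (n+2) => τ * pnAux τ (n+1) + pnAux τ n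

lemma two_eq_zero_LP : (2 : LP) = 0 := by
  rw [show (2 : LP) = 1 + 1 from by norm_num, ← single_zero_one_eq_one, ← AddMonoidAlgebra.single_add,
    show (1 + 1 : ZMod 2) = 0 from by decide]
  exact AddMonoidAlgebra.single_zero 0

lemma cayley {t : Matrix (Fin 2) (Fin 2) LP} (hdet : t.det = 1) :
    t * t = t.trace • t + 1 := by
  have hd : t 0 0 * t 1 1 - t 0 1 * t 1 0 = 1 := by rwa [det_fin_two] at hdet
  refine Matrix.ext fun i j => ?_
  fin_cases i <;> fin_cases j <;>
    simp [mul_apply, Fin.sum_univ_two, trace_fin_two, one_apply] <;>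
    first | ring1 | linear_combination -hd - two_eq_zero_LP

lemma pow_eq (t : Matrix (Fin 2) (Fin 2) LP) (hdet : t.det = 1) (n : ℕ) :
    t ^ (n + 1) = pnAux t.trace (n + 1) • t + pnAux t.trace n • (1 : Matrix (Fin 2) (Fin 2) LP) := by
  induction n with
  | zero => simp [pnAux]
  | succ n ih =>
    rw [pow_succ, ih, add_mul, smul_mul_assoc, smul_mul_assoc, one_mul, cayley hdet]
    rw [show pnAux t.trace (n+2) = t.trace * pnAux t.trace (n+1) + pnAux t.trace n from rfl]
    rw [smul_add, smul_smul, add_smul, mul_comm t.trace (pnAux t.trace (n+1))]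
    abel

lemma finite_bdd (C : ℕ) : Set.Finite {p : LP | polyDeg p ≤ C} := by
  classical
  have : Set.InjOn (fun (p : LP) => fun x : (Finset.Icc (-(C:ℤ)) C) => p.coeff x.1)
      {p : LP | polyDeg p ≤ C} := by
    intro p hp q hq h
    ext x
    rcases le_or_gt x.natAbs C with hx | hx
    · have hmem : x ∈ Finset.Icc (-(C:ℤ)) C := by simp [Finset.mem_Icc]; omega
      exact congrFun h ⟨x, hmem⟩
    · have h1 : p.coeff x = 0 := by
        by_contra h'
        have := support_le (Finsupp.mem_support_iff.2 h'); simp at hp; omega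
      have h2 : q.coeff x = 0 := by
        by_contra h'
        have := support_le (Finsupp.mem_support_iff.2 h'); simp at hq; omega
      rw [h1, h2]
  exact Set.Finite.of_finite_image (Set.toFinite _) this

lemma mulVec_cancel {A : Matrix (Fin 2) (Fin 2) LP} (h : A.det = 1) {v w : Fin 2 → LP}
    (hvw : A *ᵥ v = A *ᵥ w) : v = w := by
  have h2 := congrArg (fun u => A.adjugate *ᵥ u) hvw
  simpa only [Matrix.mulVec_mulVec, Matrix.adjugate_mul, h, one_smul, Matrix.one_mulVec] using h2

lemma exists_fixed {t : Matrix (Fin 2) (Fin 2) LP} (hdet : t.det = 1) {ξ : Fin 2 → LP} {C : ℕ}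
    (hbdd : ∀ n : ℕ, vecDeg ((t ^ n) *ᵥ ξ) ≤ C) :
    ∃ r : ℕ, 1 ≤ r ∧ (t ^ r) *ᵥ ξ = ξ := by
  classical
  have hfin : Set.Finite ({p : LP | polyDeg p ≤ C} ×ˢ {p : LP | polyDeg p ≤ C}) :=
    Set.Finite.prod (finite_bdd C) (finite_bdd C)
  have hmap : Set.MapsTo (fun n : ℕ => (((t ^ n) *ᵥ ξ) 0, ((t ^ n) *ᵥ ξ) 1)) Set.univ
      ({p : LP | polyDeg p ≤ C} ×ˢ {p : LP | polyDeg p ≤ C}) := by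
    intro n _
    constructor
    · exact le_trans (le_max_left _ _) (hbdd n)
    · exact le_trans (le_max_right _ _) (hbdd n)
  obtain ⟨a, -, b, -, hab, heq⟩ :=
    Set.infinite_univ.exists_ne_map_eq_of_mapsTo hmap hfin
  have hvec : ∀ a b : ℕ, (((t ^ a) *ᵥ ξ) 0, ((t ^ a) *ᵥ ξ) 1) = (((t ^ b) *ᵥ ξ) 0, ((t ^ b) *ᵥ ξ) 1)
      → (t ^ a) *ᵥ ξ = (t ^ b) *ᵥ ξ := by
    intro a b h
    funext i
    fin_cases i
    · exact congrArg Prod.fst h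
    · exact congrArg Prod.snd h
  -- wlog a < b
  rcases Ne.lt_or_gt hab with hlt | hlt
  · refine ⟨b - a, by omega, ?_⟩
    apply mulVec_cancel (A := t ^ a) (by rw [Matrix.det_pow, hdet, one_pow])
    rw [Matrix.mulVec_mulVec, ← pow_add, show a + (b - a) = b by omega]
    exact (hvec a b (heq)).symm
  · refine ⟨a - b, by omega, ?_⟩
    apply mulVec_cancel (A := t ^ b) (by rw [Matrix.det_pow, hdet, one_pow])
    rw [Matrix.mulVec_mulVec, ← pow_add, show b + (a - b) = a by omega]
    exact (hvec a b (heq))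

lemma key_eq {t : Matrix (Fin 2) (Fin 2) LP} (hdet : t.det = 1) {ξ : Fin 2 → LP}
    (hξ0 : ξ 0 ≠ 0) {s : ℕ} (hfix : (t ^ (s + 1)) *ᵥ ξ = ξ) :
    pnAux t.trace (s+1) ^ 2 + pnAux t.trace (s+1) * (1 - pnAux t.trace s) * t.trace
      = (1 - pnAux t.trace s) ^ 2 := by
  haveI : IsDomain LP := NoZeroDivisors.to_isDomain _
  set τ := t.trace with hτ
  set P := pnAux τ (s+1) with hP
  set Q := pnAux τ s with hQ
  set w : Fin 2 → LP := t *ᵥ ξ with hw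
  have hexp : ∀ v : Fin 2 → LP, (t ^ (s+1)) *ᵥ v = P • (t *ᵥ v) + Q • v := by
    intro v
    rw [pow_eq t hdet s, Matrix.add_mulVec, Matrix.smul_mulVec, Matrix.smul_mulVec,
      Matrix.one_mulVec]
  have hfixw : (t ^ (s+1)) *ᵥ w = w := by
    rw [hw, Matrix.mulVec_mulVec, ← pow_succ, pow_succ', ← Matrix.mulVec_mulVec, hfix]
  have htw : t *ᵥ w = τ • w + ξ := by
    rw [hw, Matrix.mulVec_mulVec, cayley hdet, Matrix.add_mulVec, Matrix.smul_mulVec,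
      Matrix.one_mulVec]
  have e1 : P * w 0 + Q * ξ 0 = ξ 0 := by
    have := congrFun (hexp ξ) 0
    rw [hfix] at this
    simpa [← hw, Pi.smul_apply, smul_eq_mul] using this.symm
  have e2 : P * (τ * w 0) + P * ξ 0 + Q * w 0 = w 0 := by
    have := congrFun (hexp w) 0
    rw [hfixw, htw] at this
    simpa [Pi.smul_apply, smul_eq_mul] using this.symm
  have hz : (P^2 + P*(1-Q)*τ - (1-Q)^2) * ξ 0 = 0 := by
    linear_combination (((1:LP) - Q) - P*τ) * e1 + P * e2
  rcases mul_eq_zero.1 hz with h | h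
  · linear_combination h
  · exact absurd h hξ0

open Polynomial in
lemma core {P q τ : LP} (hPs : Symm P) (hqs : Symm q) (hτs : Symm τ)
    (hP0 : P ≠ 0) (hE : P^2 + P*q*τ = q^2) : τ = 0 := by
  classical
  haveI : IsDomain LP := NoZeroDivisors.to_isDomain _
  have hq0 : q ≠ 0 := by
    rintro rfl
    apply hP0
    have h2 : P ^ 2 = 0 := by linear_combination hE
    exact pow_eq_zero_iff (n := 2) (by norm_num) |>.1 h2
  obtain ⟨np, Pp, hPp⟩ := exists_T_pow P
  obtain ⟨nq, Qp, hQp⟩ := exists_T_pow q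
  obtain ⟨nt, Tp, hTp⟩ := exists_T_pow τ
  set A : (ZMod 2)[X] := Pp * X ^ nq with hA
  set B : (ZMod 2)[X] := Qp * X ^ np with hB
  have hTA : Polynomial.toLaurent A = P * T np * T nq := by
    rw [hA, _root_.map_mul, hPp, Polynomial.toLaurent_X_pow]
  have hTB : Polynomial.toLaurent B = q * T nq * T np := by
    rw [hB, _root_.map_mul, hQp, Polynomial.toLaurent_X_pow]
  have hTne : ∀ m : ℤ, (T m : LP) ≠ 0 := fun m => (isUnit_T m).ne_zero
  have hA0 : A ≠ 0 := by
    intro h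
    apply hP0
    have : Polynomial.toLaurent A = 0 := by rw [h, _root_.map_zero]
    rw [hTA] at this
    rcases mul_eq_zero.1 this with h' | h'
    · rcases mul_eq_zero.1 h' with h'' | h''
      · exact h''
      · exact absurd h'' (hTne _)
    · exact absurd h' (hTne _)
  have hB0 : B ≠ 0 := by
    intro h
    apply hq0
    have : Polynomial.toLaurent B = 0 := by rw [h, _root_.map_zero]
    rw [hTB] at this
    rcases mul_eq_zero.1 this with h' | h'
    · rcases mul_eq_zero.1 h' with h'' | h''
      · exact h''
      · exact absurd h'' (hTne _)
    · exact absurd h' (hTne _)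
  have hpoly : A^2 * X^nt + A * B * Tp = B^2 * X^nt := by
    apply Polynomial.toLaurent_injective
    simp only [_root_.map_add, _root_.map_mul, _root_.map_pow, hTA, hTB, hTp, Polynomial.toLaurent_X_pow,
      Polynomial.toLaurent_X, T_pow, mul_one]
    linear_combination ((T np : LP)^2 * (T nq)^2 * T nt) * hE
  set g := EuclideanDomain.gcd A B with hg
  have hg0 : g ≠ 0 := fun h => hA0 (EuclideanDomain.gcd_eq_zero_iff.1 h).1
  obtain ⟨A₁, hA₁⟩ := EuclideanDomain.gcd_dvd_left A B
  obtain ⟨B₁, hB₁⟩ := EuclideanDomain.gcd_dvd_right A B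
  rw [← hg] at hA₁ hB₁
  have hcop : IsCoprime A₁ B₁ := by
    refine ⟨EuclideanDomain.gcdA A B, EuclideanDomain.gcdB A B, ?_⟩
    apply mul_left_cancel₀ hg0
    have hbz := EuclideanDomain.gcd_eq_gcd_ab A B
    rw [← hg] at hbz
    linear_combination -hbz - EuclideanDomain.gcdA A B * hA₁ - EuclideanDomain.gcdB A B * hB₁
  have hpoly1 : A₁^2 * X^nt + A₁ * B₁ * Tp = B₁^2 * X^nt := by
    have h2 : g^2 * (A₁^2 * X^nt + A₁ * B₁ * Tp) = g^2 * (B₁^2 * X^nt) := by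
      rw [hA₁, hB₁] at hpoly
      linear_combination hpoly
    exact mul_left_cancel₀ (pow_ne_zero 2 hg0) h2
  have hd1 : A₁ ∣ B₁^2 * X^nt :=
    ⟨A₁ * X^nt + B₁ * Tp, by linear_combination -hpoly1⟩
  have hdvdA : A₁ ∣ (X : (ZMod 2)[X])^nt :=
    (hcop.pow_right (n := 2)).dvd_of_dvd_mul_left hd1
  have hd2 : B₁ ∣ A₁^2 * X^nt :=
    ⟨B₁ * X^nt - A₁ * Tp, by linear_combination hpoly1⟩
  have hdvdB : B₁ ∣ (X : (ZMod 2)[X])^nt :=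
    (hcop.symm.pow_right (n := 2)).dvd_of_dvd_mul_left hd2
  have hunit : ∀ c : ZMod 2, IsUnit c → c = 1 := by decide
  have hXpow : ∀ D : (ZMod 2)[X], D ∣ (X : (ZMod 2)[X])^nt → ∃ a : ℕ, D = X^a := by
    intro D hD
    rcases (dvd_prime_pow Polynomial.prime_X nt).1 hD with ⟨a, _, hassoc⟩
    obtain ⟨u, hu⟩ := hassoc.symm
    obtain ⟨r, hr, hCr⟩ := Polynomial.isUnit_iff.1 u.isUnit
    refine ⟨a, ?_⟩
    rw [← hu, ← hCr, hunit r hr, Polynomial.C_1, mul_one]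
  obtain ⟨a, ha⟩ := hXpow A₁ hdvdA
  obtain ⟨b, hb⟩ := hXpow B₁ hdvdB
  -- cross relation
  have hABcross : A * B₁ = B * A₁ := by rw [hA₁, hB₁]; ring
  have hcross : P * T (b : ℤ) = q * T (a : ℤ) := by
    rw [hA, hB, ha, hb] at hABcross
    have h := congrArg Polynomial.toLaurent hABcross
    simp only [_root_.map_mul, hPp, hQp, Polynomial.toLaurent_X_pow] at h
    apply mul_right_cancel₀ (mul_ne_zero (hTne np) (hTne nq))
    linear_combination h
  have hcross2 : P * T (-(b : ℤ)) = q * T (-(a : ℤ)) := by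
    have := congrArg invert hcross
    rwa [_root_.map_mul, _root_.map_mul, invert_T, invert_T, symm_invert hPs, symm_invert hqs] at this
  have hq1 : P * T ((b : ℤ) - a) = q := by
    have : (P * T (b:ℤ)) * T (-(a:ℤ)) = q * (T (a:ℤ) * T (-(a:ℤ))) := by
      rw [hcross]; ring
    rwa [← T_add, add_neg_cancel, T_zero, mul_one, mul_assoc, ← T_add,
      show (b:ℤ) + -(a:ℤ) = (b:ℤ) - a by ring] at this
  have hq2 : P * T ((a : ℤ) - b) = q := by
    have : (P * T (-(b:ℤ))) * T (a:ℤ) = q * (T (-(a:ℤ)) * T (a:ℤ)) := by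
      rw [hcross2]; ring
    rwa [← T_add, neg_add_cancel, T_zero, mul_one, mul_assoc, ← T_add,
      show -(b:ℤ) + (a:ℤ) = (a:ℤ) - b by ring] at this
  have hTT : (T ((b:ℤ) - a) : LP) = T ((a:ℤ) - b) := by
    apply mul_left_cancel₀ hP0
    rw [hq1, hq2]
  have hab : (b : ℤ) - a = (a : ℤ) - b := by
    by_contra hne
    have h1 : (T ((b:ℤ)-a) : LP).coeff ((b:ℤ)-a) = (T ((a:ℤ)-b) : LP).coeff ((b:ℤ)-a) := by rw [hTT]
    simp only [T_apply] at h1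
    rw [if_pos trivial, if_neg (fun h => hne h.symm)] at h1
    exact one_ne_zero h1
  have hPq : P = q := by
    have hba : (b : ℤ) - a = 0 := by omega
    rw [← hq1, hba, T_zero, mul_one]
  rw [← hPq] at hE
  have : P^2 * τ = 0 := by linear_combination hE
  rcases mul_eq_zero.1 this with h | h
  · exact absurd (pow_eq_zero_iff (n := 2) (by norm_num) |>.1 h) hP0
  · exact h

/-- If for a centered CQCA matrix t (det 1, symmetric entries) the degrees
deg(tⁿ ξ) stay bounded for some vector ξ with nonzero coprime entries, then
deg(tr t) = 0, i.e. the trace is constant. -/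
theorem cqca_bounded_deg_implies_constant_trace
    (t : Matrix (Fin 2) (Fin 2) (LaurentPolynomial (ZMod 2)))
    (hdet : t.det = 1) (hsym : ∀ i j, ∀ x : ℤ, (t i j).coeff x = (t i j).coeff (-x))
    (ξ : Fin 2 → LaurentPolynomial (ZMod 2))
    (h0 : ξ 0 ≠ 0) (h1 : ξ 1 ≠ 0)
    (hcop : ∀ d : LaurentPolynomial (ZMod 2), d ∣ ξ 0 → d ∣ ξ 1 → IsUnit d)
    (hbdd : ∃ C : ℕ, ∀ n : ℕ, vecDeg ((t ^ n) *ᵥ ξ) ≤ C) :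
    polyDeg t.trace = 0 := by
  classical
  by_contra hd
  have hτs : Symm t.trace := by
    rw [Matrix.trace_fin_two]
    exact Symm.add (fun x => hsym 0 0 x) (fun x => hsym 1 1 x)
  have hτ0 : t.trace ≠ 0 := by
    intro h; rw [h, polyDeg_zero] at hd; exact hd rfl
  have hd1 : 1 ≤ polyDeg t.trace := Nat.one_le_iff_ne_zero.2 hd
  have hpn_symm : ∀ n, Symm (pnAux t.trace n) := by
    intro n
    induction n using Nat.strong_induction_on with
    | _ n ih =>
      match n with
      | 0 => exact symm_zero
      | 1 => exact symm_one
      | (m+2) =>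
        rw [show pnAux t.trace (m+2)
          = t.trace * pnAux t.trace (m+1) + pnAux t.trace m from rfl]
        exact Symm.add (Symm.mul hτs (ih (m+1) (by omega))) (ih m (by omega))
  have hpn : ∀ n, pnAux t.trace (n+1) ≠ 0 ∧
      polyDeg (pnAux t.trace (n+1)) = n * polyDeg t.trace := by
    intro n
    induction n using Nat.strong_induction_on with
    | _ n ih =>
      match n with
      | 0 =>
        refine ⟨one_ne_zero, ?_⟩
        rw [show pnAux t.trace 1 = 1 from rfl, polyDeg_one, zero_mul]
      | 1 =>
        have e : pnAux t.trace 2 = t.trace := by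
          rw [show pnAux t.trace 2
            = t.trace * pnAux t.trace 1 + pnAux t.trace 0 from rfl,
            show pnAux t.trace 1 = 1 from rfl, show pnAux t.trace 0 = 0 from rfl]
          ring
        rw [e, one_mul]
        exact ⟨hτ0, rfl⟩
      | (m+2) =>
        obtain ⟨h1ne, h1deg⟩ := ih (m+1) (by omega)
        obtain ⟨h0ne, h0deg⟩ := ih m (by omega)
        have hmul : polyDeg (t.trace * pnAux t.trace (m+2))
            = polyDeg t.trace + (m+1) * polyDeg t.trace := by
          rw [polyDeg_mul hτs (hpn_symm (m+2)) hτ0 h1ne, h1deg]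
        have hlt : polyDeg (pnAux t.trace (m+1))
            < polyDeg (t.trace * pnAux t.trace (m+2)) := by
          rw [hmul, h0deg]
          have e1 : (m+1) * polyDeg t.trace = m * polyDeg t.trace + polyDeg t.trace := by ring
          omega
        rw [show pnAux t.trace (m+3)
          = t.trace * pnAux t.trace (m+2) + pnAux t.trace (m+1) from rfl]
        constructor
        · apply polyDeg_pos_ne_zero
          rw [polyDeg_add hlt, hmul]
          omega
        · rw [polyDeg_add hlt, hmul]
          ring
  obtain ⟨C, hC⟩ := hbdd
  obtain ⟨r, hr1, hfix⟩ := exists_fixed hdet hC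
  obtain ⟨s, rfl⟩ : ∃ s, r = s + 1 := ⟨r - 1, by omega⟩
  have hE := key_eq hdet h0 hfix
  have hP0 : pnAux t.trace (s+1) ≠ 0 := (hpn s).1
  have hqsym : Symm (1 - pnAux t.trace s) := Symm.sub symm_one (hpn_symm s)
  have hzero := core (hpn_symm (s+1)) hqsym hτs hP0 hE
  exact hd (by rw [hzero, polyDeg_zero])
end

section
/- For the glider matrix t_G = [[0,1],[1,u^{-1}+u]] over Z_2[u,u^{-1}], the asymptotic degree growth rate lim_{n→∞} deg(t_G^n (0,1)ᵀ)/n equals 1 = deg(tr t_G). -/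
open LaurentPolynomial Matrix Filter

/-- The glider CQCA matrix t_G = [[0, 1], [1, u⁻¹ + u]] over Z₂[u, u⁻¹]. -/
noncomputable def gliderMatrix : Matrix (Fin 2) (Fin 2) (LaurentPolynomial (ZMod 2)) :=
  !![0, 1; 1, T (-1) + T 1]

lemma T_mul_apply (a : ℤ) (f : LaurentPolynomial (ZMod 2)) (y : ℤ) :
    (T a * f : LaurentPolynomial (ZMod 2)).coeff y = f.coeff (y - a) := by
  have h := AddMonoidAlgebra.coeff_single_mul_apply f (1 : ZMod 2) a y
  rw [show y - a = -a + y by ring]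
  exact h.trans (one_mul _)

lemma polyDeg_le {p : LaurentPolynomial (ZMod 2)} {n : ℕ}
    (h : ∀ k : ℤ, p.coeff k ≠ 0 → k.natAbs ≤ n) : polyDeg p ≤ n :=
  Finset.sup_le fun k hk => h k (Finsupp.mem_support_iff.mp hk)

lemma le_polyDeg {p : LaurentPolynomial (ZMod 2)} {k : ℤ} (h : p.coeff k ≠ 0) :
    k.natAbs ≤ polyDeg p :=
  Finset.le_sup (Finsupp.mem_support_iff.mpr h)

lemma glider_step (n : ℕ) :
    (gliderMatrix ^ (n + 1)) *ᵥ ![0, 1] =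
      ![((gliderMatrix ^ n) *ᵥ ![0, 1]) 1,
        ((gliderMatrix ^ n) *ᵥ ![0, 1]) 0
          + (T (-1) + T 1) * ((gliderMatrix ^ n) *ᵥ ![0, 1]) 1] := by
  rw [pow_succ', ← Matrix.mulVec_mulVec]
  set w := (gliderMatrix ^ n) *ᵥ ![0, 1]
  funext i
  fin_cases i <;>
    simp [gliderMatrix, Matrix.mulVec, dotProduct, Fin.sum_univ_two]

lemma glider_key (n : ℕ) :
    (((gliderMatrix ^ n) *ᵥ ![0, 1]) 1).coeff (n : ℤ) = 1 ∧
    (∀ i, ∀ k : ℤ, (((gliderMatrix ^ n) *ᵥ ![0, 1]) i).coeff k ≠ 0 → k.natAbs ≤ n) := by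
  induction n with
  | zero =>
    simp only [pow_zero, Matrix.one_mulVec]
    constructor
    · simp only [Matrix.cons_val_one, Matrix.head_cons, Matrix.cons_val_zero, Nat.cast_zero]
      rw [← T_zero, T_apply, if_pos rfl]
    · intro i k hk
      fin_cases i
      · simp only [Fin.mk_zero, Matrix.cons_val_zero] at hk
        simp at hk
      · simp only [Fin.mk_one, Matrix.cons_val_one, Matrix.head_cons, Matrix.cons_val_zero] at hk
        rw [← T_zero, T_apply] at hk
        split_ifs at hk with h
        · omega
        · simp at hk
  | succ n ih =>
    obtain ⟨h1, h2⟩ := ih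
    set w := (gliderMatrix ^ n) *ᵥ ![0, 1] with hw
    have hb : ∀ k : ℤ, k.natAbs > n → (w 1).coeff k = 0 := by
      intro k hk
      by_contra h
      exact absurd (h2 1 k h) (by omega)
    have ha : ∀ k : ℤ, k.natAbs > n → (w 0).coeff k = 0 := by
      intro k hk
      by_contra h
      exact absurd (h2 0 k h) (by omega)
    rw [glider_step n, ← hw]
    constructor
    · simp only [Matrix.cons_val_one, Matrix.head_cons, Matrix.cons_val_zero, Nat.cast_succ]
      rw [AddMonoidAlgebra.coeff_add, Finsupp.add_apply, add_mul, AddMonoidAlgebra.coeff_add, Finsupp.add_apply, T_mul_apply, T_mul_apply]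
      rw [ha ((n : ℤ) + 1) (by omega), hb ((n : ℤ) + 1 - (-1)) (by omega)]
      have : (n : ℤ) + 1 - 1 = (n : ℤ) := by ring
      rw [this, h1]
      norm_num
    · intro i k hk
      fin_cases i
      · simp only [Fin.mk_zero, Matrix.cons_val_zero] at hk
        exact le_trans (h2 1 k hk) (by omega)
      · simp only [Fin.mk_one, Matrix.cons_val_one, Matrix.head_cons, Matrix.cons_val_zero] at hk
        rw [AddMonoidAlgebra.coeff_add, Finsupp.add_apply, add_mul, AddMonoidAlgebra.coeff_add, Finsupp.add_apply, T_mul_apply, T_mul_apply] at hk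
        by_contra h
        push_neg at h
        rw [ha k (by omega), hb (k - (-1)) (by omega), hb (k - 1) (by omega)] at hk
        simp at hk

lemma glider_vecDeg (n : ℕ) : vecDeg ((gliderMatrix ^ n) *ᵥ ![0, 1]) = n := by
  obtain ⟨h1, h2⟩ := glider_key n
  apply le_antisymm
  · exact max_le (polyDeg_le (h2 0)) (polyDeg_le (h2 1))
  · have : (n : ℤ).natAbs ≤ polyDeg (((gliderMatrix ^ n) *ᵥ ![0, 1]) 1) :=
      le_polyDeg (by rw [h1]; exact one_ne_zero)
    simp only [Int.natAbs_natCast] at this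
    exact le_trans this (le_max_right _ _)

/-- The asymptotic degree growth rate of the glider CQCA applied to (0,1)ᵀ is
1, which equals deg(tr t_G). -/
theorem glider_deg_growth_rate :
    Tendsto (fun n : ℕ => (vecDeg ((gliderMatrix ^ n) *ᵥ ![0, 1]) : ℝ) / n) atTop (nhds 1) ∧
    polyDeg gliderMatrix.trace = 1 := by
  constructor
  · apply Tendsto.congr' (f₁ := fun _ : ℕ => (1 : ℝ))
    · filter_upwards [eventually_ge_atTop 1] with n hn
      rw [glider_vecDeg n]
      field_simp
    · exact tendsto_const_nhds
  · have htr : gliderMatrix.trace = T (-1) + T 1 := by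
      simp [gliderMatrix, Matrix.trace, Matrix.diag, Fin.sum_univ_two]
    rw [htr]
    apply le_antisymm
    · apply polyDeg_le
      intro k hk
      rw [AddMonoidAlgebra.coeff_add, Finsupp.add_apply, T_apply, T_apply] at hk
      by_contra h
      push_neg at h
      rw [if_neg (by omega), if_neg (by omega)] at hk
      simp at hk
    · have : (1 : ℤ).natAbs ≤ polyDeg (T (-1) + T 1 : LaurentPolynomial (ZMod 2)) := by
        apply le_polyDeg
        rw [AddMonoidAlgebra.coeff_add, Finsupp.add_apply, T_apply, T_apply, if_neg (by omega), if_pos rfl]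
        simp
      simpa using this
end
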